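/- With the notation of the Calderón–Zygmund decomposition above (the family $\{Q_j^k\}$ of maximal cubes at levels $a^k$, $a=2^{m(n+1)}$), the family $\{Q_j^k\}$ is sparse: $\Omega_{k+1}\subset\Omega_k$, the $Q_j^k$ are disjoint in $j$, and $|\Omega_{k+1}\cap Q_j^k|\le\frac12|Q_j^k|$ for all $j,k$; consequently $\int_{\mathbb{R}^n}\mathcal{M}^d(\vec f)^p v\,dx \le a^p\sum_{k,j} v(E_j^k)\Big(\prod_{i=1}^m\frac{1}{|Q_j^k|}\int_{Q_j^k} f_i\Big)^p$ for any weight $v$, where $E_j^k=Q_j^k\setminus\Omega_{k+1}$. -/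

import Mathlib

open MeasureTheory ENNReal

noncomputable section

/-- Points of `ℝⁿ`. -/
abbrev Rn (n : ℕ) := Fin n → ℝ

/-- The half-open cube with corner `c` and sidelength `h`. -/
def cube {n : ℕ} (c : Rn n) (h : ℝ) : Set (Rn n) :=
  Set.univ.pi fun i => Set.Ico (c i) (c i + h)

/-- `Q` is a (half-open, axis-parallel) cube. -/
def IsCube {n : ℕ} (Q : Set (Rn n)) : Prop := ∃ c h, 0 < h ∧ Q = cube c h

/-- The dyadic cube `2^{-k}([0,1)^n + j)` of the standard dyadic grid. -/
def dyadicCube {n : ℕ} (k : ℤ) (j : Fin n → ℤ) : Set (Rn n) :=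
  cube (fun i => (j i : ℝ) * (2:ℝ) ^ (-k)) ((2:ℝ) ^ (-k))

/-- `Q` belongs to the standard dyadic grid `𝒟`. -/
def IsDyadicCube {n : ℕ} (Q : Set (Rn n)) : Prop := ∃ k j, Q = dyadicCube k j

/-- `∫_Q g` of a (nonnegative) real function, as an element of `ℝ≥0∞`. -/
def setInt {n : ℕ} (Q : Set (Rn n)) (g : Rn n → ℝ) : ℝ≥0∞ :=
  ∫⁻ x in Q, ENNReal.ofReal (g x)

/-- The average `(1/|Q|)∫_Q g`. -/
def avg {n : ℕ} (Q : Set (Rn n)) (g : Rn n → ℝ) : ℝ≥0∞ := setInt Q g / volume Q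

/-- The weighted average `(1/σ(Q)) ∫_Q f σ`. -/
def wAvg {n : ℕ} (Q : Set (Rn n)) (σ f : Rn n → ℝ) : ℝ≥0∞ :=
  setInt Q (fun x => f x * σ x) / setInt Q σ

/-- The dyadic weighted multisublinear maximal operator `𝓜^d_{⃗σ}`. -/
def Mdw {n m : ℕ} (σ f : Fin m → Rn n → ℝ) (x : Rn n) : ℝ≥0∞ :=
  ⨆ (Q : Set (Rn n)) (_ : IsDyadicCube Q) (_ : x ∈ Q), ∏ i, wAvg Q (σ i) (f i)

/-- The dyadic weighted maximal operator `M^d_σ`. -/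
def Mdw1 {n : ℕ} (σ f : Rn n → ℝ) (x : Rn n) : ℝ≥0∞ :=
  ⨆ (Q : Set (Rn n)) (_ : IsDyadicCube Q) (_ : x ∈ Q), wAvg Q σ f

/-- The multisublinear maximal operator `𝓜` over all cubes. -/
def MM {n m : ℕ} (f : Fin m → Rn n → ℝ) (x : Rn n) : ℝ≥0∞ :=
  ⨆ (Q : Set (Rn n)) (_ : IsCube Q) (_ : x ∈ Q), ∏ i, avg Q (f i)

/-- The dyadic multisublinear maximal operator `𝓜^d`. -/
def MMd {n m : ℕ} (f : Fin m → Rn n → ℝ) (x : Rn n) : ℝ≥0∞ :=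
  ⨆ (Q : Set (Rn n)) (_ : IsDyadicCube Q) (_ : x ∈ Q), ∏ i, avg Q (f i)

/-- The Hardy–Littlewood maximal operator (over all cubes). -/
def HLM {n : ℕ} (g : Rn n → ℝ) (x : Rn n) : ℝ≥0∞ :=
  ⨆ (Q : Set (Rn n)) (_ : IsCube Q) (_ : x ∈ Q), avg Q g

/-- `(∫ g^p v dx)^{1/p}` for an `ℝ≥0∞`-valued `g`. -/
def nLp {n : ℕ} (p : ℝ) (v : Rn n → ℝ) (g : Rn n → ℝ≥0∞) : ℝ≥0∞ :=
  (∫⁻ x, g x ^ p * ENNReal.ofReal (v x)) ^ (1/p)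

/-- The `L^p(v)` norm of a (nonnegative) real function. -/
def nLpR {n : ℕ} (p : ℝ) (v f : Rn n → ℝ) : ℝ≥0∞ :=
  nLp p v (fun x => ENNReal.ofReal (f x))

/-- The conjugate exponent `q' = q/(q-1)`. -/
def conjExp (q : ℝ) : ℝ := q / (q - 1)

/-- The dual weights `σ_i = w_i^{1-p_i'}`. -/
def dualW {n m : ℕ} (p : Fin m → ℝ) (w : Fin m → Rn n → ℝ) : Fin m → Rn n → ℝ :=
  fun i x => w i x ^ (1 - conjExp (p i))

/-- The geometric average `exp((1/|Q|)∫_Q log g)`, realized (in the extended sense)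
as `inf_{r>0} ((1/|Q|)∫_Q g^r)^{1/r}`. -/
def expLogAvg {n : ℕ} (Q : Set (Rn n)) (g : Rn n → ℝ) : ℝ≥0∞ :=
  ⨅ (r : ℝ) (_ : 0 < r), ((∫⁻ x in Q, ENNReal.ofReal (g x) ^ r) / volume Q) ^ (1/r)

/-- A sparse family of cubes indexed by `ℤ × J`. -/
def IsSparse {n : ℕ} (J : Type) (Q : ℤ → J → Set (Rn n)) : Prop :=
  (∀ (k : ℤ) (j j' : J), j ≠ j' → Q k j ∩ Q k j' = ∅) ∧
  (∀ k : ℤ, (⋃ j, Q (k+1) j) ⊆ ⋃ j, Q k j) ∧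
  (∀ (k : ℤ) (j : J), volume ((⋃ j', Q (k+1) j') ∩ Q k j) ≤ volume (Q k j) / 2)

/-- A general dyadic grid. -/
def IsDyadicGrid {n : ℕ} (G : Set (Set (Rn n))) : Prop :=
  (∀ Q ∈ G, ∃ (k : ℤ) (c : Rn n), Q = cube c ((2:ℝ) ^ k)) ∧
  (∀ Q ∈ G, ∀ R ∈ G, Q ∩ R = Q ∨ Q ∩ R = R ∨ Q ∩ R = ∅) ∧
  (∀ k : ℤ,
    ⋃₀ {Q | Q ∈ G ∧ ∃ c, Q = cube c ((2:ℝ) ^ k)} = Set.univ ∧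
    {Q | Q ∈ G ∧ ∃ c, Q = cube c ((2:ℝ) ^ k)}.Pairwise fun Q R => Q ∩ R = ∅)

/-!
Dyadic cubes are nested or disjoint, so maximality makes the cubes of one level disjoint and puts
every cube of level `k+1` that meets `Q_j^k` inside it. Each such cube `S` has
`a^{k+1} |S|^m ≤ ∏ ∫_S f_i`, and by Hölder this survives summation over disjoint `S`; on the other
side the dyadic parent `R` of `Q_j^k` has `∏ ∫_R f_i ≤ a^k (2^n |Q_j^k|)^m`. As
`a = (2^{n+1})^m`, comparing the two gives `|Ω_{k+1} ∩ Q_j^k| ≤ |Q_j^k| / 2`. The integral bound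
holds because `𝓜^d f ≤ a^{k+1} < a ∏ avg_{Q_j^k} f_i` on `E_j^k`, and the sets `E_j^k` cover
`{0 < 𝓜^d f < ∞}`.
-/

section DyadicCubes

variable {n : ℕ}

lemma mem_dyadicCube_iff {k : ℤ} {j : Fin n → ℤ} {x : Rn n} :
    x ∈ dyadicCube k j ↔ ∀ i, ⌊x i * 2 ^ k⌋ = j i := by
  have h : (0:ℝ) < 2 ^ k := by positivity
  simp only [dyadicCube, cube, Set.mem_pi, Set.mem_univ, true_implies, Set.mem_Ico,
    Int.floor_eq_iff, zpow_neg, ← div_eq_mul_inv, div_le_iff₀ h]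
  refine forall_congr' fun i => and_congr_right' ?_
  rw [← lt_div_iff₀ h, add_div, one_div]

lemma floor_mul_two_zpow_add_div (t : ℝ) (k : ℤ) (d : ℕ) :
    ⌊t * 2 ^ (k + d)⌋ / 2 ^ d = ⌊t * 2 ^ k⌋ := by
  have h : t * 2 ^ k = t * 2 ^ (k + d) / ((2 ^ d : ℕ) : ℝ) := by
    rw [zpow_add₀ two_ne_zero, zpow_natCast]
    push_cast
    field_simp
  rw [h, Int.floor_div_natCast]
  push_cast
  rfl

lemma dyadicCube_subset_of_mem {k : ℤ} (d : ℕ) {j j' : Fin n → ℤ} {x : Rn n}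
    (hx : x ∈ dyadicCube k j) (hx' : x ∈ dyadicCube (k + d) j') :
    dyadicCube (k + d) j' ⊆ dyadicCube k j := by
  intro y hy
  rw [mem_dyadicCube_iff] at hx hx' hy ⊢
  intro i
  rw [← floor_mul_two_zpow_add_div _ k d, hy i, ← hx' i, floor_mul_two_zpow_add_div, hx i]

lemma dyadicCube_subset_parent (k : ℤ) (j : Fin n → ℤ) :
    dyadicCube k j ⊆ dyadicCube (k - 1) (fun i => j i / 2) := by
  intro x hx
  rw [mem_dyadicCube_iff] at hx ⊢
  intro i
  have h := floor_mul_two_zpow_add_div (x i) (k - 1) 1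
  rw [Nat.cast_one, sub_add_cancel, hx i, pow_one] at h
  exact h.symm

lemma volume_dyadicCube (k : ℤ) (j : Fin n → ℤ) :
    volume (dyadicCube k j) = ENNReal.ofReal (2 ^ (-k)) ^ n := by
  simp [dyadicCube, cube, volume_pi_pi, Real.volume_Ico]

lemma volume_dyadicCube_parent (k : ℤ) (j : Fin n → ℤ) :
    volume (dyadicCube (k - 1) (fun i => j i / 2)) = 2 ^ n * volume (dyadicCube k j) := by
  rw [volume_dyadicCube, volume_dyadicCube, neg_sub, sub_eq_add_neg, zpow_add₀ two_ne_zero,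
    zpow_one, ENNReal.ofReal_mul zero_le_two, ENNReal.ofReal_ofNat, mul_pow]

namespace IsDyadicCube

variable {Q R : Set (Rn n)}

lemma measurableSet (hQ : IsDyadicCube Q) : MeasurableSet Q := by
  obtain ⟨k, j, rfl⟩ := hQ
  exact MeasurableSet.univ_pi fun _ => measurableSet_Ico

lemma volume_ne_zero (hQ : IsDyadicCube Q) : volume Q ≠ 0 := by
  obtain ⟨k, j, rfl⟩ := hQ
  rw [volume_dyadicCube]
  exact pow_ne_zero _ (ENNReal.ofReal_pos.2 (by positivity)).ne'

lemma volume_ne_top (hQ : IsDyadicCube Q) : volume Q ≠ ∞ := by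
  obtain ⟨k, j, rfl⟩ := hQ
  rw [volume_dyadicCube]
  exact ENNReal.pow_ne_top ENNReal.ofReal_ne_top

lemma subset_or_subset (hQ : IsDyadicCube Q) (hR : IsDyadicCube R) (h : (Q ∩ R).Nonempty) :
    Q ⊆ R ∨ R ⊆ Q := by
  obtain ⟨k, j, rfl⟩ := hQ
  obtain ⟨k', j', rfl⟩ := hR
  obtain ⟨x, hxQ, hxR⟩ := h
  rcases le_total k k' with hk | hk
  · obtain ⟨d, rfl⟩ : ∃ d : ℕ, k' = k + d := ⟨(k' - k).toNat, by omega⟩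
    exact Or.inr (dyadicCube_subset_of_mem d hxQ hxR)
  · obtain ⟨d, rfl⟩ : ∃ d : ℕ, k = k' + d := ⟨(k - k').toNat, by omega⟩
    exact Or.inl (dyadicCube_subset_of_mem d hxR hxQ)

lemma exists_parent (hn : 0 < n) (hQ : IsDyadicCube Q) :
    ∃ R, IsDyadicCube R ∧ Q ⊂ R ∧ volume R = 2 ^ n * volume Q := by
  obtain ⟨k, j, rfl⟩ := hQ
  refine ⟨_, ⟨_, _, rfl⟩, (dyadicCube_subset_parent k j).ssubset_of_ne fun h => ?_,
    volume_dyadicCube_parent k j⟩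
  have h1 : 1 * volume (dyadicCube k j) = 2 ^ n * volume (dyadicCube k j) := by
    rw [one_mul, ← volume_dyadicCube_parent, ← h]
  rw [ENNReal.mul_left_inj (volume_ne_zero ⟨k, j, rfl⟩) (volume_ne_top ⟨k, j, rfl⟩)] at h1
  exact (one_lt_pow' one_lt_two hn.ne').ne h1

end IsDyadicCube

lemma countable_setOf_isDyadicCube : {Q : Set (Rn n) | IsDyadicCube Q}.Countable := by
  have h : {Q : Set (Rn n) | IsDyadicCube Q} =
      Set.range fun p : ℤ × (Fin n → ℤ) => dyadicCube p.1 p.2 := by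
    ext Q
    simp [IsDyadicCube, eq_comm]
  exact h ▸ Set.countable_range _

end DyadicCubes

lemma ENNReal.eq_top_of_forall_zpow_lt {a y : ℝ≥0∞} (ha : 1 < a) (haT : a ≠ ∞)
    (h : ∀ k : ℤ, a ^ k < y) : y = ∞ := by
  by_contra hy
  obtain ⟨k, -, hk⟩ := ENNReal.exists_mem_Ico_zpow (pos_of_gt (h 0)).ne' hy ha haT
  exact (h (k + 1)).not_ge hk.le

lemma ENNReal.tsum_prod_rpow_le_prod_rpow_tsum {ι : Type*} [Countable ι] {m : ℕ} (hm : m ≠ 0)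
    (z : Fin m → ι → ℝ≥0∞) :
    ∑' j, ∏ i, z i j ^ (m⁻¹ : ℝ) ≤ ∏ i, (∑' j, z i j) ^ (m⁻¹ : ℝ) := by
  let _ : MeasurableSpace ι := ⊤
  have h := ENNReal.lintegral_prod_norm_pow_le (μ := Measure.count) Finset.univ
      (fun i _ => (measurable_from_top (f := fun j => z i j)).aemeasurable)
      (p := fun _ => (m⁻¹ : ℝ)) (by simp [hm]) (fun _ _ => by positivity)
  simpa only [lintegral_count] using h

section Averages

variable {n m : ℕ} {f : Fin m → Rn n → ℝ}

lemma prod_avg_mul_volume_pow {S : Set (Rn n)} (h0 : volume S ≠ 0) (hT : volume S ≠ ∞) :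
    (∏ i, avg S (f i)) * volume S ^ m = ∏ i, setInt S (f i) := by
  simp only [avg, div_eq_mul_inv, Finset.prod_mul_distrib, Finset.prod_const, Finset.card_univ,
    Fintype.card_fin, ← ENNReal.inv_pow, mul_assoc]
  rw [ENNReal.inv_mul_cancel (pow_ne_zero _ h0) (ENNReal.pow_ne_top hT), mul_one]

/-- After taking `m`-th roots the left side is additive in `|S|` and, by Hölder, the right side
is superadditive. -/
lemma mul_volume_iUnion_pow_le {ι : Type*} [Countable ι] (hm : 0 < m) {S : ι → Set (Rn n)}
    {R : Set (Rn n)} (hSm : ∀ l, MeasurableSet (S l)) (hS : Pairwise (Function.onFun Disjoint S))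
    (hSR : ∀ l, S l ⊆ R) {c : ℝ≥0∞} (hc : ∀ l, c * volume (S l) ^ m ≤ ∏ i, setInt (S l) (f i)) :
    c * volume (⋃ l, S l) ^ m ≤ ∏ i, setInt R (f i) := by
  set r : ℝ := (m : ℝ)⁻¹
  have hr : 0 ≤ r := by positivity
  have pow_rpow : ∀ x : ℝ≥0∞, (x ^ m) ^ r = x := ENNReal.pow_rpow_inv_natCast hm.ne'
  have rpow_pow : ∀ x : ℝ≥0∞, (x ^ r) ^ m = x := ENNReal.rpow_inv_natCast_pow hm.ne'
  have hroot : ∀ l, c ^ r * volume (S l) ≤ ∏ i, setInt (S l) (f i) ^ r := fun l => by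
    simpa only [ENNReal.mul_rpow_of_nonneg _ _ hr, pow_rpow,
      ENNReal.prod_rpow_of_nonneg hr] using ENNReal.rpow_le_rpow (hc l) hr
  have key : c ^ r * volume (⋃ l, S l) ≤ ∏ i, setInt R (f i) ^ r :=
    calc c ^ r * volume (⋃ l, S l) = ∑' l, c ^ r * volume (S l) := by
          rw [measure_iUnion hS hSm, ENNReal.tsum_mul_left]
      _ ≤ ∑' l, ∏ i, setInt (S l) (f i) ^ r := ENNReal.tsum_le_tsum hroot
      _ ≤ ∏ i, (∑' l, setInt (S l) (f i)) ^ r :=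
          ENNReal.tsum_prod_rpow_le_prod_rpow_tsum hm.ne' fun i l => setInt (S l) (f i)
      _ = ∏ i, setInt (⋃ l, S l) (f i) ^ r := by
          simp only [setInt, lintegral_iUnion hSm hS]
      _ ≤ ∏ i, setInt R (f i) ^ r := by
          gcongr with i
          exact lintegral_mono_set (Set.iUnion_subset hSR)
  calc c * volume (⋃ l, S l) ^ m = (c ^ r * volume (⋃ l, S l)) ^ m := by
        rw [mul_pow, rpow_pow]
    _ ≤ (∏ i, setInt R (f i) ^ r) ^ m := pow_le_pow_left' key m
    _ = ∏ i, setInt R (f i) := by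
        rw [ENNReal.prod_rpow_of_nonneg hr, rpow_pow]

end Averages

/-- The maximal dyadic cubes `Q_j^k` of the Calderón–Zygmund decomposition of `𝓜^d f` at the
heights `a^k`. -/
structure IsCZFamily {n m : ℕ} (f : Fin m → Rn n → ℝ) (a : ℝ≥0∞) {J : Type}
    (Q : ℤ → J → Set (Rn n)) : Prop where
  isDyadicCube : ∀ k j, IsDyadicCube (Q k j)
  injective : ∀ k, Function.Injective (Q k)
  iUnion_eq : ∀ k, ⋃ j, Q k j = {x | a ^ k < MMd f x}
  lt_prod_avg : ∀ k j, a ^ k < ∏ i, avg (Q k j) (f i)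
  prod_avg_le_of_ssubset : ∀ k j R, IsDyadicCube R → Q k j ⊂ R → ∏ i, avg R (f i) ≤ a ^ k

/-- The set `E_j^k = Q_j^k \ Ω_{k+1}`. -/
def czLayer {n : ℕ} {J : Type} (Q : ℤ → J → Set (Rn n)) (k : ℤ) (j : J) : Set (Rn n) :=
  Q k j \ ⋃ j', Q (k + 1) j'

namespace IsCZFamily

variable {n m : ℕ} {f : Fin m → Rn n → ℝ} {a : ℝ≥0∞} {J : Type} {Q : ℤ → J → Set (Rn n)}

lemma countable (hQ : IsCZFamily f a Q) : Countable J :=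
  Set.countable_univ_iff.1 <| by
    simpa using (countable_setOf_isDyadicCube.preimage (hQ.injective 0)).mono
      fun j _ => hQ.isDyadicCube 0 j

lemma measurableSet (hQ : IsCZFamily f a Q) (k : ℤ) (j : J) : MeasurableSet (Q k j) :=
  (hQ.isDyadicCube k j).measurableSet

lemma measurableSet_czLayer (hQ : IsCZFamily f a Q) (k : ℤ) (j : J) :
    MeasurableSet (czLayer Q k j) :=
  have := hQ.countable
  (hQ.measurableSet k j).diff (MeasurableSet.iUnion fun j' => hQ.measurableSet (k + 1) j')

lemma mem_iUnion_iff (hQ : IsCZFamily f a Q) {k : ℤ} {x : Rn n} :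
    x ∈ ⋃ j, Q k j ↔ a ^ k < MMd f x := by
  rw [hQ.iUnion_eq k]
  rfl

lemma zpow_lt_of_mem (hQ : IsCZFamily f a Q) {k : ℤ} {j : J} {x : Rn n} (hx : x ∈ Q k j) :
    a ^ k < MMd f x :=
  hQ.mem_iUnion_iff.1 (Set.mem_iUnion_of_mem j hx)

lemma mul_volume_pow_le (hQ : IsCZFamily f a Q) (k : ℤ) (j : J) :
    a ^ k * volume (Q k j) ^ m ≤ ∏ i, setInt (Q k j) (f i) := by
  rw [← prod_avg_mul_volume_pow (hQ.isDyadicCube k j).volume_ne_zero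
    (hQ.isDyadicCube k j).volume_ne_top]
  gcongr
  exact (hQ.lt_prod_avg k j).le

lemma pairwise_disjoint (hQ : IsCZFamily f a Q) (k : ℤ) :
    Pairwise (Function.onFun Disjoint (Q k)) := by
  intro j j' hjj'
  rw [Function.onFun, Set.disjoint_iff_inter_eq_empty]
  by_contra h
  have hmaximal : ∀ {j j'}, j ≠ j' → Q k j ⊆ Q k j' → False := fun hne hsub =>
    (hQ.prod_avg_le_of_ssubset k _ _ (hQ.isDyadicCube k _)
      (hsub.ssubset_of_ne ((hQ.injective k).ne hne))).not_gt (hQ.lt_prod_avg k _)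
  rcases (hQ.isDyadicCube k j).subset_or_subset (hQ.isDyadicCube k j')
    (Set.nonempty_iff_ne_empty.2 h) with hsub | hsub
  · exact hmaximal hjj' hsub
  · exact hmaximal hjj'.symm hsub

lemma iUnion_succ_subset (hQ : IsCZFamily f a Q) (ha : 1 ≤ a) (k : ℤ) :
    ⋃ j, Q (k + 1) j ⊆ ⋃ j, Q k j := fun _ hx =>
  hQ.mem_iUnion_iff.2 ((ENNReal.zpow_le_of_le ha (lt_add_one k).le).trans_lt
    (hQ.mem_iUnion_iff.1 hx))

lemma subset_of_inter_nonempty (hQ : IsCZFamily f a Q) (ha : 1 ≤ a) {k : ℤ} {j j' : J}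
    (h : (Q (k + 1) j' ∩ Q k j).Nonempty) : Q (k + 1) j' ⊆ Q k j := by
  rcases (hQ.isDyadicCube _ j').subset_or_subset (hQ.isDyadicCube k j) h with hsub | hsub
  · exact hsub
  rcases hsub.eq_or_ssubset with heq | hssub
  · exact heq.symm.subset
  · exact absurd (hQ.lt_prod_avg (k + 1) j') ((hQ.prod_avg_le_of_ssubset k j _ (hQ.isDyadicCube _ j') hssub).trans
      (ENNReal.zpow_le_of_le ha (lt_add_one k).le)).not_gt

lemma dim_pos (hQ : IsCZFamily f a Q) (hfae : ∀ᵐ x ∂(volume : Measure (Rn n)), MMd f x < ∞)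
    (ha : 1 < a) (haT : a ≠ ∞) (j : J) : 0 < n := by
  rw [Nat.pos_iff_ne_zero]
  rintro rfl
  obtain ⟨x, hx⟩ := hfae.exists
  have hmem : ∀ k, x ∈ Q k j := fun k => by
    obtain ⟨k', j', h⟩ := hQ.isDyadicCube k j
    rw [h, mem_dyadicCube_iff]
    exact fun i => i.elim0
  exact hx.ne (ENNReal.eq_top_of_forall_zpow_lt ha haT fun k => hQ.zpow_lt_of_mem (hmem k))

lemma volume_inter_le_half (hQ : IsCZFamily f (2 ^ (m * (n + 1))) Q) (hm : 0 < m)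
    (hfae : ∀ᵐ x ∂(volume : Measure (Rn n)), MMd f x < ∞) (k : ℤ) (j : J) :
    volume ((⋃ j', Q (k + 1) j') ∩ Q k j) ≤ volume (Q k j) / 2 := by
  have := hQ.countable
  set a : ℝ≥0∞ := 2 ^ (m * (n + 1))
  have ha1 : 1 < a := one_lt_pow' one_lt_two (by positivity)
  have ha0 : a ≠ 0 := (zero_lt_one.trans ha1).ne'
  have haT : a ≠ ∞ := ENNReal.pow_ne_top ENNReal.ofNat_ne_top
  obtain ⟨R, hR, hQR, hvolR⟩ := (hQ.isDyadicCube k j).exists_parent (hQ.dim_pos hfae ha1 haT j)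
  have hpack : a ^ (k + 1) * volume ((⋃ j', Q (k + 1) j') ∩ Q k j) ^ m ≤ ∏ i, setInt R (f i) := by
    rw [Set.iUnion_inter]
    refine mul_volume_iUnion_pow_le hm
      (fun j' => (hQ.measurableSet _ j').inter (hQ.measurableSet k j))
      ((hQ.pairwise_disjoint (k + 1)).mono fun _ _ h => h.mono inf_le_left inf_le_left)
      (fun j' => Set.inter_subset_right.trans hQR.subset) fun j' => ?_
    rcases (Q (k + 1) j' ∩ Q k j).eq_empty_or_nonempty with h | h
    · simp [h, hm.ne']
    · rw [Set.inter_eq_left.2 (hQ.subset_of_inter_nonempty ha1.le h)]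
      exact hQ.mul_volume_pow_le _ _
  have hR_le : ∏ i, setInt R (f i) ≤ a ^ k * (2 ^ n * volume (Q k j)) ^ m := by
    rw [← prod_avg_mul_volume_pow hR.volume_ne_zero hR.volume_ne_top, hvolR]
    gcongr
    exact hQ.prod_avg_le_of_ssubset k j R hR hQR
  set X := volume ((⋃ j', Q (k + 1) j') ∩ Q k j)
  have hpow : a ^ k * (2 ^ n * (2 * X)) ^ m ≤ a ^ k * (2 ^ n * volume (Q k j)) ^ m :=
    calc a ^ k * (2 ^ n * (2 * X)) ^ m = a ^ (k + 1) * X ^ m := by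
          rw [ENNReal.zpow_add ha0 haT, zpow_one, mul_assoc]
          congr 1
          rw [← mul_assoc, ← pow_succ, mul_pow, ← pow_mul, mul_comm (n + 1)]
      _ ≤ a ^ k * (2 ^ n * volume (Q k j)) ^ m := hpack.trans hR_le
  rw [ENNReal.mul_le_mul_iff_right (ENNReal.zpow_pos ha0 haT k).ne'
      (ENNReal.zpow_lt_top ha0 haT k).ne, ENNReal.pow_le_pow_left_iff hm.ne',
    ENNReal.mul_le_mul_iff_right (by positivity) (ENNReal.pow_ne_top ENNReal.ofNat_ne_top)] at hpow
  rw [ENNReal.le_div_iff_mul_le (Or.inl two_ne_zero) (Or.inl ENNReal.ofNat_ne_top), mul_comm]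
  exact hpow

lemma isSparse (hQ : IsCZFamily f (2 ^ (m * (n + 1))) Q) (hm : 0 < m)
    (hfae : ∀ᵐ x ∂(volume : Measure (Rn n)), MMd f x < ∞) : IsSparse J Q :=
  ⟨fun k _ _ h => Set.disjoint_iff_inter_eq_empty.1 (hQ.pairwise_disjoint k h),
    hQ.iUnion_succ_subset (one_le_pow₀ one_le_two), hQ.volume_inter_le_half hm hfae⟩

lemma le_mul_prod_avg_of_mem_czLayer (hQ : IsCZFamily f a Q) (ha0 : a ≠ 0) (haT : a ≠ ∞)
    {k : ℤ} {j : J} {x : Rn n} (hx : x ∈ czLayer Q k j) :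
    MMd f x ≤ a * ∏ i, avg (Q k j) (f i) :=
  calc MMd f x ≤ a ^ (k + 1) := not_lt.1 fun h => hx.2 (hQ.mem_iUnion_iff.2 h)
    _ = a * a ^ k := by rw [ENNReal.zpow_add ha0 haT, zpow_one, mul_comm]
    _ ≤ a * ∏ i, avg (Q k j) (f i) := by
        gcongr
        exact (hQ.lt_prod_avg k j).le

lemma exists_mem_czLayer (hQ : IsCZFamily f a Q) (ha : 1 < a) (haT : a ≠ ∞) {x : Rn n}
    (h0 : MMd f x ≠ 0) (hT : MMd f x ≠ ∞) : ∃ k j, x ∈ czLayer Q k j := by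
  obtain ⟨k, hk, hk'⟩ := ENNReal.exists_mem_Ioc_zpow h0 hT ha haT
  obtain ⟨j, hj⟩ := Set.mem_iUnion.1 (hQ.mem_iUnion_iff.2 hk)
  exact ⟨k, j, hj, fun h => (hQ.mem_iUnion_iff.1 h).not_ge hk'⟩

lemma lintegral_rpow_mul_le (hQ : IsCZFamily f a Q)
    (hfae : ∀ᵐ x ∂(volume : Measure (Rn n)), MMd f x < ∞) (ha : 1 < a) (haT : a ≠ ∞)
    {v : Rn n → ℝ} (hvm : Measurable v) {p : ℝ} (hp : 0 < p) :
    ∫⁻ x, MMd f x ^ p * ENNReal.ofReal (v x) ≤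
      a ^ p * ∑' kj : ℤ × J,
        setInt (czLayer Q kj.1 kj.2) v * (∏ i, avg (Q kj.1 kj.2) (f i)) ^ p := by
  have := hQ.countable
  have ha0 : a ≠ 0 := (zero_lt_one.trans ha).ne'
  set g : Rn n → ℝ≥0∞ := fun x => MMd f x ^ p * ENNReal.ofReal (v x)
  set T := ⋃ kj : ℤ × J, czLayer Q kj.1 kj.2
  have hT : MeasurableSet T := MeasurableSet.iUnion fun kj => hQ.measurableSet_czLayer _ _
  have hgT : ∀ᵐ x, g x ≤ T.indicator g x := by
    filter_upwards [hfae] with x hx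
    rcases eq_or_ne (MMd f x) 0 with h0 | h0
    · simp [g, h0, ENNReal.zero_rpow_of_pos hp]
    · obtain ⟨k, j, hkj⟩ := hQ.exists_mem_czLayer ha haT h0 hx.ne
      rw [Set.indicator_of_mem (Set.mem_iUnion.2 ⟨(k, j), hkj⟩)]
  have hlayer : ∀ kj : ℤ × J, ∫⁻ x in czLayer Q kj.1 kj.2, g x ≤
      a ^ p * (setInt (czLayer Q kj.1 kj.2) v * (∏ i, avg (Q kj.1 kj.2) (f i)) ^ p) := by
    rintro ⟨k, j⟩
    calc ∫⁻ x in czLayer Q k j, g x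
        ≤ ∫⁻ x in czLayer Q k j, (a * ∏ i, avg (Q k j) (f i)) ^ p * ENNReal.ofReal (v x) :=
          setLIntegral_mono' (hQ.measurableSet_czLayer k j) fun x hx => mul_le_mul_left
            (ENNReal.rpow_le_rpow (hQ.le_mul_prod_avg_of_mem_czLayer ha0 haT hx) hp.le) _
      _ = a ^ p * (setInt (czLayer Q k j) v * (∏ i, avg (Q k j) (f i)) ^ p) := by
          rw [lintegral_const_mul _ hvm.ennreal_ofReal, ENNReal.mul_rpow_of_nonneg _ _ hp.le,
            setInt]
          ring
  calc ∫⁻ x, g x ≤ ∫⁻ x, T.indicator g x := lintegral_mono_ae hgT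
    _ = ∫⁻ x in T, g x := lintegral_indicator hT g
    _ ≤ ∑' kj : ℤ × J, ∫⁻ x in czLayer Q kj.1 kj.2, g x := lintegral_iUnion_le _ _
    _ ≤ ∑' kj : ℤ × J,
          a ^ p * (setInt (czLayer Q kj.1 kj.2) v * (∏ i, avg (Q kj.1 kj.2) (f i)) ^ p) :=
        ENNReal.tsum_le_tsum hlayer
    _ = _ := ENNReal.tsum_mul_left

end IsCZFamily

theorem stmt15_general {n m : ℕ} (hm : 0 < m) (pp : ℝ) (hpp : 0 < pp)
    (f : Fin m → Rn n → ℝ)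
    (hfae : ∀ᵐ x ∂(volume : Measure (Rn n)), MMd f x < ∞)
    (v : Rn n → ℝ) (hvm : Measurable v)
    {J : Type} (Q : ℤ → J → Set (Rn n))
    (hQd : ∀ k j, IsDyadicCube (Q k j))
    (hinj : ∀ (k : ℤ) (j j' : J), j ≠ j' → Q k j ≠ Q k j')
    (hcover : ∀ k : ℤ, (⋃ j, Q k j) = {x | ((2:ℝ≥0∞) ^ (m * (n+1))) ^ k < MMd f x})
    (hgt : ∀ (k : ℤ) (j : J), ((2:ℝ≥0∞) ^ (m * (n+1))) ^ k < ∏ i, avg (Q k j) (f i))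
    (hmax : ∀ (k : ℤ) (j : J), ∀ R : Set (Rn n), IsDyadicCube R → Q k j ⊆ R → Q k j ≠ R →
      ∏ i, avg R (f i) ≤ ((2:ℝ≥0∞) ^ (m * (n+1))) ^ k) :
    IsSparse J Q ∧
      (∫⁻ x, MMd f x ^ pp * ENNReal.ofReal (v x)) ≤
        ((2:ℝ≥0∞) ^ (m * (n+1))) ^ pp *
          ∑' kj : ℤ × J,
            setInt (Q kj.1 kj.2 \ ⋃ j', Q (kj.1 + 1) j') v *
              (∏ i, avg (Q kj.1 kj.2) (f i)) ^ pp := by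
  have hQ : IsCZFamily f (2 ^ (m * (n + 1))) Q :=
    { isDyadicCube := hQd
      injective := fun k _ _ => not_imp_not.1 (hinj k _ _)
      iUnion_eq := hcover
      lt_prod_avg := hgt
      prod_avg_le_of_ssubset := fun k j R hR hQR => hmax k j R hR hQR.subset hQR.ne }
  have ha : (1 : ℝ≥0∞) < 2 ^ (m * (n + 1)) := one_lt_pow' one_lt_two (by positivity)
  exact ⟨hQ.isSparse hm hfae,
    hQ.lintegral_rpow_mul_le hfae ha (ENNReal.pow_ne_top ENNReal.ofNat_ne_top) hvm hpp⟩

/-- The Calderón–Zygmund cubes form a sparse family and give the basic estimate for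
`∫ (𝓜^d ⃗f)^p v`. -/
theorem stmt15 {n m : ℕ} (hm : 0 < m) (pp : ℝ) (hpp : 0 < pp)
    (f : Fin m → Rn n → ℝ) (hf0 : ∀ i x, 0 ≤ f i x) (hfm : ∀ i, Measurable (f i))
    (hfae : ∀ᵐ x ∂(volume : Measure (Rn n)), MMd f x < ∞)
    (v : Rn n → ℝ) (hv0 : ∀ x, 0 ≤ v x) (hvm : Measurable v)
    {J : Type} (Q : ℤ → J → Set (Rn n))
    (hQd : ∀ k j, IsDyadicCube (Q k j))
    (hinj : ∀ (k : ℤ) (j j' : J), j ≠ j' → Q k j ≠ Q k j')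
    (hcover : ∀ k : ℤ, (⋃ j, Q k j) = {x | ((2:ℝ≥0∞) ^ (m * (n+1))) ^ k < MMd f x})
    (hgt : ∀ (k : ℤ) (j : J), ((2:ℝ≥0∞) ^ (m * (n+1))) ^ k < ∏ i, avg (Q k j) (f i))
    (hmax : ∀ (k : ℤ) (j : J), ∀ R : Set (Rn n), IsDyadicCube R → Q k j ⊆ R → Q k j ≠ R →
      ∏ i, avg R (f i) ≤ ((2:ℝ≥0∞) ^ (m * (n+1))) ^ k) :
    IsSparse J Q ∧
      (∫⁻ x, MMd f x ^ pp * ENNReal.ofReal (v x)) ≤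
        ((2:ℝ≥0∞) ^ (m * (n+1))) ^ pp *
          ∑' kj : ℤ × J,
            setInt (Q kj.1 kj.2 \ ⋃ j', Q (kj.1 + 1) j') v *
              (∏ i, avg (Q kj.1 kj.2) (f i)) ^ pp :=
  stmt15_general hm pp hpp f hfae v hvm Q hQd hinj hcover hgt hmax
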